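/- Let K be a convex body in ℝⁿ and let E be a convex body in ℝⁿ with nonempty interior, and let γ_1, …, γ_n be the complex roots (counted with multiplicity) of the relative Steiner polynomial f(K,E,s). If Re(γ_i) ≤ 0 for all i = 1, …, n, then |Re(γ_1)| + ⋯ + |Re(γ_n)| ≤ n·R(K;E). -/

import Mathlib

open scoped Pointwise
open MeasureTheory Finset Filter Polynomial

/-!
For `ρ > 0`, `K + ρE` contains a translate of `ρE` and, since `(R + ρ)E = RE + ρE` by convexity,
lies in a translate of `(R + ρ)E`. Hence `vol E · ρⁿ ≤ f(K,E,ρ) ≤ vol E · (ρ + R)ⁿ`, and comparing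
coefficients as `ρ → ∞` gives `W_n = vol E` and `n W_{n-1} ≤ n R W_n`. By Vieta,
`n W_{n-1} = -W_n ∑ Re γ_i`.
-/

namespace Polynomial

variable {𝕜 : Type*} [NormedField 𝕜] [LinearOrder 𝕜] [IsStrictOrderedRing 𝕜] [OrderTopology 𝕜]

theorem leadingCoeff_nonneg_of_eventually_nonneg {P : 𝕜[X]}
    (hP : ∀ᶠ x in atTop, 0 ≤ P.eval x) : 0 ≤ P.leadingCoeff := by
  by_contra! hneg
  rcases lt_or_ge 0 P.degree with hdeg | hdeg
  · obtain ⟨x, hx, hlt⟩ :=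
      (hP.and ((tendsto_atBot_of_leadingCoeff_nonpos P hdeg hneg.le).eventually_lt_atBot 0)).exists
    exact hlt.not_ge hx
  · rw [eq_C_of_degree_le_zero hdeg] at hP hneg
    simp only [eval_C, leadingCoeff_C] at hP hneg
    exact hneg.not_ge hP.exists.choose_spec

theorem coeff_nonneg_of_eventually_nonneg {P : 𝕜[X]} {m : ℕ} (hdeg : P.natDegree ≤ m)
    (hP : ∀ᶠ x in atTop, 0 ≤ P.eval x) : 0 ≤ P.coeff m := by
  rcases hdeg.lt_or_eq with hlt | rfl
  · rw [coeff_eq_zero_of_natDegree_lt hlt]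
  · exact leadingCoeff_nonneg_of_eventually_nonneg hP

theorem coeff_le_of_eventually_le {P Q : 𝕜[X]} {m : ℕ} (hP : P.natDegree ≤ m)
    (hQ : Q.natDegree ≤ m) (hPQ : ∀ᶠ x in atTop, P.eval x ≤ Q.eval x) :
    P.coeff m ≤ Q.coeff m := by
  have := coeff_nonneg_of_eventually_nonneg (m := m)
    ((natDegree_sub_le Q P).trans (max_le hQ hP)) (hPQ.mono fun x hx => by simpa using hx)
  simpa using this

theorem coeff_pred_le_of_eventually_le {P Q : 𝕜[X]} {m : ℕ} (hP : P.natDegree ≤ m)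
    (hQ : Q.natDegree ≤ m) (hPQ : ∀ᶠ x in atTop, P.eval x ≤ Q.eval x)
    (hm : P.coeff m = Q.coeff m) : P.coeff (m - 1) ≤ Q.coeff (m - 1) := by
  have hdeg : (Q - P).natDegree ≤ m - 1 :=
    natDegree_le_pred ((natDegree_sub_le Q P).trans (max_le hQ hP)) (by simp [hm])
  have := coeff_nonneg_of_eventually_nonneg hdeg (hPQ.mono fun x hx => by simpa using hx)
  simpa using this

theorem coeff_C_mul_prod_X_sub_C_pred {R : Type*} [CommRing R] [Nontrivial R] {n : ℕ}
    (hn : 0 < n) (c : R) (γ : Fin n → R) :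
    (C c * ∏ i, (X - C (γ i))).coeff (n - 1) = -(c * ∑ i, γ i) := by
  have hdeg : (∏ i, (X - C (γ i))).natDegree = n := by
    simp [natDegree_finsetProd_X_sub_C_eq_card]
  have hcoeff : (∏ i, (X - C (γ i))).coeff (n - 1) = -∑ i, γ i := by
    rw [← prod_X_sub_C_nextCoeff, nextCoeff_of_natDegree_pos (by omega), hdeg]
  rw [coeff_C_mul, hcoeff, mul_neg]

end Polynomial

/-- For `W i = W_i(K;E)` this is the relative Steiner polynomial `f(K,E,·)`. -/
noncomputable def steinerPoly {R : Type*} [Semiring R] (n : ℕ) (W : ℕ → R) : R[X] :=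
  ∑ i ∈ range (n + 1), C (n.choose i * W i) * X ^ i

section SteinerPoly

variable {R : Type*} [Semiring R] (n : ℕ) (W : ℕ → R)

theorem eval_steinerPoly (x : R) :
    (steinerPoly n W).eval x = ∑ i ∈ range (n + 1), n.choose i * W i * x ^ i := by
  simp [steinerPoly, eval_finsetSum]

theorem natDegree_steinerPoly_le : (steinerPoly n W).natDegree ≤ n :=
  natDegree_sum_le_of_forall_le _ _ fun i hi =>
    (natDegree_C_mul_X_pow_le _ i).trans (Nat.lt_succ_iff.mp (mem_range.mp hi))

theorem coeff_steinerPoly {i : ℕ} (hi : i ≤ n) :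
    (steinerPoly n W).coeff i = n.choose i * W i := by
  simp only [steinerPoly, finsetSum_coeff, coeff_C_mul_X_pow, sum_ite_eq, mem_range]
  simp [Nat.lt_succ_of_le hi]

theorem map_steinerPoly {S : Type*} [Semiring S] (f : R →+* S) :
    (steinerPoly n W).map f = steinerPoly n (f ∘ W) := by
  simp [steinerPoly, Polynomial.map_sum]

end SteinerPoly

theorem steinerPoly_coeff_bounds {n : ℕ} {W : ℕ → ℝ} {V R : ℝ}
    (hlow : ∀ ρ > 0, V * ρ ^ n ≤ (steinerPoly n W).eval ρ)
    (hup : ∀ ρ > 0, (steinerPoly n W).eval ρ ≤ V * (ρ + R) ^ n) :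
    W n = V ∧ n * W (n - 1) ≤ n * (R * V) := by
  have hdegL : (C V * X ^ n).natDegree ≤ n := natDegree_C_mul_X_pow_le V n
  have hdegU : (C V * (X + C R) ^ n).natDegree ≤ n :=
    (natDegree_C_mul_le _ _).trans (by rw [natDegree_pow, natDegree_X_add_C, mul_one])
  have hL : ∀ᶠ ρ in atTop, (C V * X ^ n).eval ρ ≤ (steinerPoly n W).eval ρ :=
    (eventually_gt_atTop 0).mono fun ρ hρ => by simpa using hlow ρ hρ
  have hU : ∀ᶠ ρ in atTop, (steinerPoly n W).eval ρ ≤ (C V * (X + C R) ^ n).eval ρ :=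
    (eventually_gt_atTop 0).mono fun ρ hρ => by simpa using hup ρ hρ
  have hcoeff := coeff_steinerPoly n W le_rfl
  have hWn : W n = V := by
    have h₁ := coeff_le_of_eventually_le hdegL (natDegree_steinerPoly_le n W) hL
    have h₂ := coeff_le_of_eventually_le (natDegree_steinerPoly_le n W) hdegU hU
    simp [coeff_C_mul, coeff_X_add_C_pow, hcoeff] at h₁ h₂
    linarith
  refine ⟨hWn, ?_⟩
  rcases Nat.eq_zero_or_pos n with rfl | hn
  · simp
  have := coeff_pred_le_of_eventually_le (natDegree_steinerPoly_le n W) hdegU hU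
    (by simp [hcoeff, coeff_C_mul, coeff_X_add_C_pow, hWn])
  rw [coeff_steinerPoly n W (Nat.sub_le n 1), coeff_C_mul, coeff_X_add_C_pow,
    Nat.sub_sub_self hn, Nat.choose_symm hn, Nat.choose_one_right] at this
  linarith

theorem steinerPoly_sum_roots_re {n : ℕ} {W : ℕ → ℝ} {γ : Fin n → ℂ}
    (hfact : (steinerPoly n W).map Complex.ofRealHom = C (W n : ℂ) * ∏ i, (X - C (γ i))) :
    n * W (n - 1) = -(W n * ∑ i, (γ i).re) := by
  rcases Nat.eq_zero_or_pos n with rfl | hn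
  · simp
  have h := congrArg (fun P => (P.coeff (n - 1)).re) hfact
  simp only [coeff_map, coeff_steinerPoly n W (Nat.sub_le n 1), Nat.choose_symm hn,
    Nat.choose_one_right, coeff_C_mul_prod_X_sub_C_pred hn] at h
  simpa [Complex.re_sum] using h

theorem measure_le_measure_add {G : Type*} [AddGroup G] [MeasurableSpace G]
    (μ : Measure G) [μ.IsAddLeftInvariant] {s : Set G} (hs : s.Nonempty) (t : Set G) :
    μ t ≤ μ (s + t) := by
  obtain ⟨x, hx⟩ := hs
  calc μ t = μ (x +ᵥ t) := (measure_vadd μ x t).symm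
    _ ≤ μ (s + t) := measure_mono (Set.vadd_set_subset_add hx)

theorem add_smul_subset_vadd_smul {V : Type*} [AddCommGroup V] [Module ℝ V] {K E : Set V}
    (hE : Convex ℝ E) {x : V} {R ρ : ℝ} (hR : 0 ≤ R) (hρ : 0 ≤ ρ) (hK : K ⊆ x +ᵥ R • E) :
    K + ρ • E ⊆ x +ᵥ (R + ρ) • E := by
  rw [hE.add_smul hR hρ, ← vadd_add_assoc]
  exact Set.add_subset_add_right hK

theorem volume_smul_eq_ofReal {n : ℕ} {E : Set (EuclideanSpace ℝ (Fin n))} (hE : volume E ≠ ⊤)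
    {r : ℝ} (hr : 0 ≤ r) : volume (r • E) = ENNReal.ofReal ((volume E).toReal * r ^ n) := by
  rw [Measure.addHaar_smul_of_nonneg _ hr, finrank_euclideanSpace_fin, mul_comm,
    ENNReal.ofReal_mul ENNReal.toReal_nonneg, ENNReal.ofReal_toReal hE]

section SteinerBounds

variable {n : ℕ} {K E : Set (EuclideanSpace ℝ (Fin n))} {W : ℕ → ℝ}

theorem mul_pow_le_eval_steinerPoly
    (hW : ∀ ρ : ℝ, 0 ≤ ρ → volume (K + ρ • E) = ENNReal.ofReal ((steinerPoly n W).eval ρ))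
    (hE : volume E ≠ ⊤) (hE0 : volume E ≠ 0) (hK : K.Nonempty) {ρ : ℝ} (hρ : 0 < ρ) :
    (volume E).toReal * ρ ^ n ≤ (steinerPoly n W).eval ρ := by
  have hV : 0 < (volume E).toReal := ENNReal.toReal_pos hE0 hE
  have h := ((volume_smul_eq_ofReal hE hρ.le).symm.trans_le
    (measure_le_measure_add volume hK _)).trans_eq (hW ρ hρ.le)
  exact (ENNReal.ofReal_le_ofReal_iff'.mp h).resolve_right (not_le.mpr (by positivity))

theorem eval_steinerPoly_le_mul_pow
    (hW : ∀ ρ : ℝ, 0 ≤ ρ → volume (K + ρ • E) = ENNReal.ofReal ((steinerPoly n W).eval ρ))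
    (hE : volume E ≠ ⊤) (hEconv : Convex ℝ E) {x : EuclideanSpace ℝ (Fin n)} {R : ℝ}
    (hR : 0 ≤ R) (hK : K ⊆ x +ᵥ R • E) {ρ : ℝ} (hρ : 0 ≤ ρ) :
    (steinerPoly n W).eval ρ ≤ (volume E).toReal * (ρ + R) ^ n := by
  have h : ENNReal.ofReal ((steinerPoly n W).eval ρ) ≤
      ENNReal.ofReal ((volume E).toReal * (R + ρ) ^ n) := by
    rw [← hW ρ hρ, ← volume_smul_eq_ofReal hE (by positivity),
      ← measure_vadd volume x ((R + ρ) • E)]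
    exact measure_mono (add_smul_subset_vadd_smul hEconv hR hρ hK)
  rwa [add_comm ρ, ← ENNReal.ofReal_le_ofReal_iff (by positivity)]

end SteinerBounds

theorem steiner_roots_sum_re_le_circumradius_general
    {n : ℕ}
    (K E : Set (EuclideanSpace ℝ (Fin n)))
    (hKne : K.Nonempty)
    (hEconv : Convex ℝ E) (hEcomp : IsCompact E)
    (hEint : (interior E).Nonempty)
    (W : ℕ → ℝ)
    (hW : ∀ ρ : ℝ, 0 ≤ ρ →
      volume (K + ρ • E) =
        ENNReal.ofReal (∑ i ∈ Finset.range (n + 1), (n.choose i : ℝ) * W i * ρ ^ i))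
    (γ : Fin n → ℂ)
    (hfact : ∀ s : ℂ, (∑ i ∈ Finset.range (n + 1), (n.choose i : ℂ) * (W i : ℂ) * s ^ i) =
      (W n : ℂ) * ∏ i : Fin n, (s - γ i))
    (hneg : ∀ i : Fin n, (γ i).re ≤ 0)
    (RKE : ℝ)
    (hR : IsLeast {R : ℝ | 0 ≤ R ∧ ∃ x : EuclideanSpace ℝ (Fin n), K ⊆ x +ᵥ R • E} RKE) :
    ∑ i : Fin n, |(γ i).re| ≤ n * RKE := by
  obtain ⟨⟨hR0, x, hKx⟩, -⟩ := hR
  simp_rw [← eval_steinerPoly] at hW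
  have hEfin : volume E ≠ ⊤ := hEcomp.measure_lt_top.ne
  have hE0 : volume E ≠ 0 := (Measure.measure_pos_of_nonempty_interior _ hEint).ne'
  obtain ⟨hWn, hnext⟩ := steinerPoly_coeff_bounds
    (fun ρ hρ => mul_pow_le_eval_steinerPoly hW hEfin hE0 hKne hρ)
    (fun ρ hρ => eval_steinerPoly_le_mul_pow hW hEfin hEconv hR0 hKx hρ.le)
  have hmap : (steinerPoly n W).map Complex.ofRealHom = C (W n : ℂ) * ∏ i, (X - C (γ i)) :=
    Polynomial.funext fun s => by
      simpa [map_steinerPoly, eval_steinerPoly, eval_prod] using hfact s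
  have hvieta := steinerPoly_sum_roots_re hmap
  have habs : ∑ i, |(γ i).re| = -∑ i, (γ i).re := by
    rw [← sum_neg_distrib]
    exact sum_congr rfl fun i _ => abs_of_nonpos (hneg i)
  rw [hWn] at hvieta
  rw [habs]
  refine le_of_mul_le_mul_left ?_ (ENNReal.toReal_pos hE0 hEfin)
  linarith

/-- If `γ 1, …, γ n` are the complex roots, with multiplicity, of the
relative Steiner polynomial `f(K,E,s)` of a convex body `K` relative to a convex body `E`
with nonempty interior, and all of them have non-positive real part, then
`|Re γ 1| + ⋯ + |Re γ n| ≤ n · R(K;E)`. -/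
theorem steiner_roots_sum_re_le_circumradius
    {n : ℕ}
    (K E : Set (EuclideanSpace ℝ (Fin n)))
    (hKconv : Convex ℝ K) (hKcomp : IsCompact K) (hKne : K.Nonempty)
    (hEconv : Convex ℝ E) (hEcomp : IsCompact E) (hEne : E.Nonempty)
    (hEint : (interior E).Nonempty)
    (W : ℕ → ℝ)
    (hW : ∀ ρ : ℝ, 0 ≤ ρ →
      volume (K + ρ • E) =
        ENNReal.ofReal (∑ i ∈ Finset.range (n + 1), (n.choose i : ℝ) * W i * ρ ^ i))
    (γ : Fin n → ℂ)
    (hfact : ∀ s : ℂ, (∑ i ∈ Finset.range (n + 1), (n.choose i : ℂ) * (W i : ℂ) * s ^ i) =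
      (W n : ℂ) * ∏ i : Fin n, (s - γ i))
    (hneg : ∀ i : Fin n, (γ i).re ≤ 0)
    (RKE : ℝ)
    (hR : IsLeast {R : ℝ | 0 ≤ R ∧ ∃ x : EuclideanSpace ℝ (Fin n), K ⊆ x +ᵥ R • E} RKE) :
    ∑ i : Fin n, |(γ i).re| ≤ n * RKE :=
  steiner_roots_sum_re_le_circumradius_general K E hKne hEconv hEcomp hEint W hW γ hfact hneg RKE hR
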